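/- arXiv:2208.12375 — 4 statements merged into one kernel-verified Lean document; each statement's English description precedes it below -/
import Mathlib

section
/- Let a=(a_1,...,a_n) and e=(e_1,...,e_n) be arbitrary real sequences. The matrix M_{e→a} is totally non-negative if and only if e is a restricted growth sequence relative to a (in the general algorithmic sense). -/
open Polynomial Finset

/-- A real square matrix is totally non-negative if every minor (determinant of a
square submatrix selected by strictly increasing row indices and strictly increasing
column indices) is non-negative. -/
def TNN {N : ℕ} (A : Matrix (Fin N) (Fin N) ℝ) : Prop :=
  ∀ (r : ℕ) (ρ γ : Fin r → Fin N), StrictMono ρ → StrictMono γ →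
    0 ≤ (A.submatrix ρ γ).det

/-- `IsCOB n a e M` says that `M` is the change-of-basis matrix `M_{e→a}`:
for each `0 ≤ m ≤ n`, the entry `M m k` is the coefficient of `∏_{i=1}^k (x - a_i)`
in the expansion of `∏_{i=1}^m (x - e_i)` in the basis
`1, (x-a₁), …, ∏_{i=1}^n (x-a_i)`.  (Sequences are 0-indexed: `a i` is `a_{i+1}`.)
Since that basis expansion is unique, this characterizes `M_{e→a}` uniquely. -/
def IsCOB (n : ℕ) (a e : ℕ → ℝ) (M : Matrix (Fin (n+1)) (Fin (n+1)) ℝ) : Prop :=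
  ∀ m : Fin (n+1),
    (∏ i ∈ Finset.range (m : ℕ), (X - C (e i))) =
      ∑ k : Fin (n+1), C (M m k) * ∏ i ∈ Finset.range (k : ℕ), (X - C (a i))

/-- One step of the algorithmic restricted-growth test: given `a_i` and the current
list `X`, find the first element of `X` that is `≥ a_i`; if none exists delete the
last element of `X`; if it equals `a_i` delete that occurrence; if it exceeds `a_i`,
fail (return `none`). -/
noncomputable def rgsStep (ai : ℝ) (Xl : List ℝ) : Option (List ℝ) :=
  match Xl.findIdx? (fun x => decide (ai ≤ x)) with
  | none => some Xl.dropLast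
  | some j => if Xl.getD j 0 = ai then some (Xl.eraseIdx j) else none

/-- Run the first `i` steps of the algorithm (with caps `a 0, a 1, …`), starting
from the list `Xl`. -/
noncomputable def rgsRun (a : ℕ → ℝ) (Xl : List ℝ) : ℕ → Option (List ℝ)
  | 0 => some Xl
  | i + 1 => (rgsRun a Xl i).bind (rgsStep (a i))

/-- `e` is a restricted growth sequence relative to `a` (general algorithmic sense):
the algorithm, started on the list `(e_1, …, e_n)`, completes all `n` steps without
failure. -/
def IsRGGen (n : ℕ) (a e : ℕ → ℝ) : Prop :=
  (rgsRun a (List.ofFn fun i : Fin n => e i) n).isSome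

/-!
Expanding in the Newton basis `∏_{i<k} (X - a_i)` amounts to dividing repeatedly by `X - a₀`,
`X - a₁`, …, so the Newton coefficients of `(X - a₀) g` with respect to `a` are those of `g` with
respect to `a' = (a₁, a₂, …)`, shifted by one. Let `j` be the first index with `e_j ≥ a₀`.
If `e_j = a₀`, or if there is no such index (`j = n`), the algorithm erases `e_j`, giving `e'`, and
`∏_{i≤m} (X - e_i) = (X - a₀) ∏_{i<m} (X - e'_i) + c_m ∏_{i<m} (X - e_i)` with `c_m = a₀ - e_m ≥ 0`
for `m < j` and `c_m = 0` otherwise. So row `m + 1` of `M_{e→a}` is row `m + 1` of `1 ⊕ M_{e'→a'}`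
plus `c_m` times row `m`. Adding a non-negative multiple of a row to the next one preserves total
non-negativity, which gives one direction by induction on `n`. Conversely, these row operations
do not change minors on consecutive rows, so a negative such minor of `M_{e'→a'}` lifts to
`M_{e→a}`, bordered if necessary by row `m` and column `0`, whose pivot `∏_{i<m} (a₀ - e_i)` is
positive for `m < j`. If `e_j > a₀` the algorithm fails, and the entry `∏_{i≤j} (a₀ - e_i)` of
`M_{e→a}` is negative.
-/

variable {R : Type*} [CommRing R]

namespace Polynomial

noncomputable def divXSubC (x : R) : R[X] →ₗ[R] R[X] where
  toFun p := p /ₘ (X - C x)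
  map_add' p q := by
    nontriviality R
    refine (div_modByMonic_unique _ (p %ₘ (X - C x) + q %ₘ (X - C x)) (monic_X_sub_C x)
      ⟨?_, ?_⟩).1
    · linear_combination modByMonic_add_div p (X - C x) + modByMonic_add_div q (X - C x)
    · exact (degree_add_le _ _).trans_lt (max_lt (degree_modByMonic_lt _ (monic_X_sub_C x))
        (degree_modByMonic_lt _ (monic_X_sub_C x)))
  map_smul' c p := by
    nontriviality R
    refine (div_modByMonic_unique _ (c • (p %ₘ (X - C x))) (monic_X_sub_C x) ⟨?_, ?_⟩).1
    · rw [RingHom.id_apply, mul_smul_comm, ← smul_add, modByMonic_add_div p (X - C x)]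
    · exact (degree_smul_le _ _).trans_lt (degree_modByMonic_lt _ (monic_X_sub_C x))

/-- `newtonCoeff a k f` is the coefficient of `∏ i < k, (X - a i)` when `f` is expanded in the
Newton basis with nodes `a`, i.e. the `k`-th iterated divided difference of `f`. -/
noncomputable def newtonCoeff : (ℕ → R) → ℕ → R[X] →ₗ[R] R
  | a, 0 => leval (a 0)
  | a, k + 1 => newtonCoeff (fun i => a (i + 1)) k ∘ₗ divXSubC (a 0)

theorem newtonCoeff_zero (a : ℕ → R) (f : R[X]) : newtonCoeff a 0 f = f.eval (a 0) := rfl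

theorem newtonCoeff_zero_X_sub_C_mul (a : ℕ → R) (g : R[X]) :
    newtonCoeff a 0 ((X - C (a 0)) * g) = 0 := by
  simp [newtonCoeff_zero]

theorem newtonCoeff_succ_X_sub_C_mul (a : ℕ → R) (k : ℕ) (g : R[X]) :
    newtonCoeff a (k + 1) ((X - C (a 0)) * g) = newtonCoeff (fun i => a (i + 1)) k g := by
  simp only [newtonCoeff, LinearMap.comp_apply, divXSubC, LinearMap.coe_mk, AddHom.coe_mk,
    mul_divByMonic_cancel_left g (monic_X_sub_C (a 0))]

theorem newtonCoeff_prod_X_sub_C (a : ℕ → R) (j k : ℕ) :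
    newtonCoeff a j (∏ i ∈ range k, (X - C (a i))) = if j = k then 1 else 0 := by
  induction k generalizing a j with
  | zero =>
    nontriviality R
    cases j with
    | zero => simp [newtonCoeff_zero]
    | succ j =>
      have h1 : (1 : R[X]) /ₘ (X - C (a 0)) = 0 := by
        rw [divByMonic_eq_zero_iff (monic_X_sub_C _), degree_one, degree_X_sub_C]
        exact zero_lt_one
      simp [newtonCoeff, divXSubC, h1]
  | succ k ih =>
    rw [prod_range_succ']
    cases j with
    | zero => simp [newtonCoeff_zero]
    | succ j => rw [mul_comm, newtonCoeff_succ_X_sub_C_mul, ih]; simp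

theorem newtonCoeff_sum_C_mul {n : ℕ} (a : ℕ → R) (c : Fin (n + 1) → R) (j : Fin (n + 1)) :
    newtonCoeff a j (∑ k : Fin (n + 1), C (c k) * ∏ i ∈ range k, (X - C (a i))) = c j := by
  simp [← smul_eq_C_mul, newtonCoeff_prod_X_sub_C, Fin.val_inj]

end Polynomial

/-- `M_{e→a}`, with rows and columns indexed by all of `ℕ`. -/
noncomputable def newtonMatrix (a e : ℕ → R) : Matrix ℕ ℕ R :=
  Matrix.of fun m k => newtonCoeff a k (∏ i ∈ range m, (X - C (e i)))

theorem IsCOB.eq_submatrix {n : ℕ} {a e : ℕ → ℝ} {M : Matrix (Fin (n + 1)) (Fin (n + 1)) ℝ}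
    (hM : IsCOB n a e M) : M = (newtonMatrix a e).submatrix Fin.val Fin.val := by
  ext m k
  rw [Matrix.submatrix_apply, newtonMatrix, Matrix.of_apply, hM m, newtonCoeff_sum_C_mul]

/-- The block-diagonal matrix `1 ⊕ B`. -/
def padOne (B : Matrix ℕ ℕ R) : Matrix ℕ ℕ R :=
  Matrix.of fun p k => match p, k with
    | 0, 0 => 1
    | p + 1, k + 1 => B p k
    | _ + 1, 0 => 0
    | 0, _ + 1 => 0

@[simp] theorem padOne_zero_zero (B : Matrix ℕ ℕ R) : padOne B 0 0 = 1 := rfl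
@[simp] theorem padOne_succ_succ (B : Matrix ℕ ℕ R) (p k : ℕ) :
    padOne B (p + 1) (k + 1) = B p k := rfl
@[simp] theorem padOne_succ_zero (B : Matrix ℕ ℕ R) (p : ℕ) : padOne B (p + 1) 0 = 0 := rfl
@[simp] theorem padOne_zero_succ (B : Matrix ℕ ℕ R) (k : ℕ) : padOne B 0 (k + 1) = 0 := rfl

theorem newtonMatrix_zero (a e : ℕ → R) (B : Matrix ℕ ℕ R) : newtonMatrix a e 0 = padOne B 0 := by
  funext k
  have h := newtonCoeff_prod_X_sub_C a k 0
  cases k <;> simpa [newtonMatrix] using h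

theorem newtonMatrix_succ {a e e' : ℕ → R} {q : ℕ} {c : R}
    (h : ∏ i ∈ range (q + 1), (X - C (e i)) =
      (X - C (a 0)) * ∏ i ∈ range q, (X - C (e' i)) + C c * ∏ i ∈ range q, (X - C (e i))) :
    newtonMatrix a e (q + 1) =
      padOne (newtonMatrix (fun i => a (i + 1)) e') (q + 1) + c • newtonMatrix a e q := by
  funext k
  cases k <;>
    simp [newtonMatrix, h, ← smul_eq_C_mul, newtonCoeff_zero_X_sub_C_mul,
      newtonCoeff_succ_X_sub_C_mul]

def eraseAt {α : Type*} (e : ℕ → α) (j i : ℕ) : α := e (if i < j then i else i + 1)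

theorem eraseAt_of_lt {α : Type*} (e : ℕ → α) {j i : ℕ} (h : i < j) : eraseAt e j i = e i := by
  simp [eraseAt, h]

theorem prod_range_succ_eq_mul_prod_eraseAt {M : Type*} [CommMonoid M] (f : ℕ → M) {j q : ℕ}
    (hjq : j ≤ q) : ∏ i ∈ range (q + 1), f i = f j * ∏ i ∈ range q, eraseAt f j i := by
  induction q, hjq using Nat.le_induction with
  | base =>
    rw [prod_range_succ, mul_comm]
    congr 1
    exact prod_congr rfl fun i hi => (eraseAt_of_lt f (mem_range.1 hi)).symm
  | succ q hjq ih =>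
    rw [prod_range_succ, ih, prod_range_succ, mul_assoc]
    simp [eraseAt, Nat.not_lt.2 hjq]

theorem prod_range_succ_X_sub_C_eq (e : ℕ → R) (x : R) {j q : ℕ} (h : q < j ∨ e j = x) :
    ∏ i ∈ range (q + 1), (X - C (e i)) =
      (X - C x) * ∏ i ∈ range q, (X - C (eraseAt e j i)) +
        C (if q < j then x - e q else 0) * ∏ i ∈ range q, (X - C (e i)) := by
  by_cases hq : q < j
  · have hagree : ∏ i ∈ range q, (X - C (eraseAt e j i)) = ∏ i ∈ range q, (X - C (e i)) :=
      prod_congr rfl fun i hi => by rw [eraseAt_of_lt e ((mem_range.1 hi).trans hq)]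
    rw [hagree, if_pos hq, prod_range_succ, C_sub]
    ring
  · rw [if_neg hq, C_0, zero_mul, add_zero, ← h.resolve_left hq,
      prod_range_succ_eq_mul_prod_eraseAt (fun i => X - C (e i)) (Nat.not_lt.1 hq)]
    rfl

theorem newtonMatrix_col_zero (a e : ℕ → R) (m : ℕ) :
    newtonMatrix a e m 0 = ∏ i ∈ range m, (a 0 - e i) := by
  simp [newtonMatrix, newtonCoeff_zero, eval_prod]

theorem newtonMatrix_succ_eraseAt (a e : ℕ → R) {j q : ℕ} (h : q < j ∨ e j = a 0) :
    newtonMatrix a e (q + 1) =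
      padOne (newtonMatrix (fun i => a (i + 1)) (eraseAt e j)) (q + 1) +
        (if q < j then a 0 - e q else 0) • newtonMatrix a e q :=
  newtonMatrix_succ (prod_range_succ_X_sub_C_eq e (a 0) h)

theorem newtonMatrix_col_zero_pos {a e : ℕ → ℝ} {j : ℕ} (hlt : ∀ i < j, e i < a 0) {m : ℕ}
    (hm : m ≤ j) : 0 < newtonMatrix a e m 0 := by
  rw [newtonMatrix_col_zero]
  exact prod_pos fun i hi => sub_pos.2 (hlt i ((mem_range.1 hi).trans_le hm))

theorem rgsRun_succ (a : ℕ → ℝ) (l : List ℝ) (k : ℕ) :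
    rgsRun a l (k + 1) = (rgsStep (a 0) l).bind fun l' => rgsRun (fun i => a (i + 1)) l' k := by
  induction k with
  | zero => simp [rgsRun]
  | succ k ih => rw [rgsRun, ih, Option.bind_assoc]; rfl

theorem List.ofFn_eraseIdx {α : Type*} (e : ℕ → α) {n j : ℕ} (hj : j < n + 1) :
    (List.ofFn fun i : Fin (n + 1) => e i).eraseIdx j =
      List.ofFn fun i : Fin n => eraseAt e j i := by
  refine List.ext_getElem (by simp [List.length_eraseIdx, hj]) fun i h₁ h₂ => ?_
  rw [List.getElem_eraseIdx, List.getElem_ofFn]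
  split <;> rw [List.getElem_ofFn] <;> simp_all [eraseAt]

section
variable {x : ℝ} {e : ℕ → ℝ} {n j : ℕ}

theorem findIdx?_ofFn_eq_some (hj : j < n) (hlt : ∀ i < j, e i < x) (hx : x ≤ e j) :
    (List.ofFn fun i : Fin n => e i).findIdx? (fun y => decide (x ≤ y)) = some j := by
  rw [List.findIdx?_eq_some_iff_getElem]
  exact ⟨by simpa using hj, by simpa using hx, fun i hi => by simpa using hlt i hi⟩

theorem rgsStep_ofFn_eq_none (hj : j < n) (hlt : ∀ i < j, e i < x) (hx : x < e j) :
    rgsStep x (List.ofFn fun i : Fin n => e i) = none := by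
  have hget : (List.ofFn fun i : Fin n => e i).getD j 0 = e j := by
    rw [List.getD_eq_getElem _ _ (by simpa using hj), List.getElem_ofFn]
  rw [rgsStep, findIdx?_ofFn_eq_some hj hlt hx.le]
  dsimp only
  rw [hget, if_neg hx.ne']

theorem rgsStep_ofFn_eq_some (hlt : ∀ i < j, e i < x) (hx : j = n + 1 ∨ j ≤ n ∧ e j = x) :
    rgsStep x (List.ofFn fun i : Fin (n + 1) => e i) =
      some (List.ofFn fun i : Fin n => eraseAt e j i) := by
  rcases hx with rfl | ⟨hj, hx⟩
  · have hfind : (List.ofFn fun i : Fin (n + 1) => e i).findIdx? (fun y => decide (x ≤ y)) =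
        none := by
      rw [List.findIdx?_eq_none_iff]
      intro y hy
      obtain ⟨i, rfl⟩ := List.mem_ofFn.1 hy
      simpa using hlt i i.isLt
    rw [rgsStep, hfind]
    dsimp only
    rw [List.dropLast_eq_eraseIdx (i := n) (by simp), List.ofFn_eraseIdx e n.lt_succ_self]
    simp [eraseAt]
  · have hget : (List.ofFn fun i : Fin (n + 1) => e i).getD j 0 = e j := by
      rw [List.getD_eq_getElem _ _ (by simp; omega), List.getElem_ofFn]
    rw [rgsStep, findIdx?_ofFn_eq_some (Nat.lt_succ_of_le hj) hlt hx.ge]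
    dsimp only
    rw [hget, if_pos hx, List.ofFn_eraseIdx e (Nat.lt_succ_of_le hj)]

end

theorem isRGGen_succ_iff {a e : ℕ → ℝ} {N j : ℕ} (hlt : ∀ i < j, e i < a 0)
    (hx : j = N + 1 ∨ j ≤ N ∧ e j = a 0) :
    IsRGGen (N + 1) a e ↔ IsRGGen N (fun i => a (i + 1)) (eraseAt e j) := by
  rw [IsRGGen, rgsRun_succ, rgsStep_ofFn_eq_some hlt hx]
  rfl

theorem not_isRGGen_succ {a e : ℕ → ℝ} {N j : ℕ} (hj : j ≤ N) (hlt : ∀ i < j, e i < a 0)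
    (hx : a 0 < e j) : ¬ IsRGGen (N + 1) a e := by
  rw [IsRGGen, rgsRun_succ, rgsStep_ofFn_eq_none (Nat.lt_succ_of_le hj) hlt hx]
  simp

theorem exists_first_not_lt (x : ℝ) (e : ℕ → ℝ) (N : ℕ) :
    ∃ j, (∀ i < j, e i < x) ∧ (j ≤ N ∧ x < e j ∨ j = N + 1 ∨ j ≤ N ∧ e j = x) := by
  classical
  have hP : ∃ j, j = N + 1 ∨ x ≤ e j := ⟨N + 1, Or.inl rfl⟩
  refine ⟨Nat.find hP, fun i hi => not_le.1 (not_or.1 (Nat.find_min hP hi)).2, ?_⟩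
  have hle : Nat.find hP ≤ N + 1 := Nat.find_min' hP (Or.inl rfl)
  rcases Nat.find_spec hP with h | h
  · exact Or.inr (Or.inl h)
  · rcases hle.lt_or_eq with hlt | heq
    · rcases h.lt_or_eq with h | h
      · exact Or.inl ⟨by omega, h⟩
      · exact Or.inr (Or.inr ⟨by omega, h.symm⟩)
    · exact Or.inr (Or.inl heq)

namespace Matrix

variable {l m n α : Type*} [DecidableEq m]

theorem submatrix_updateRow_of_eq [DecidableEq l] (A : Matrix m n α) {ρ : l → m}
    (hρ : Function.Injective ρ) {i : l} {p : m} (h : ρ i = p) (v : n → α) (γ : l → n) :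
    (A.updateRow p v).submatrix ρ γ = (A.submatrix ρ γ).updateRow i (v ∘ γ) := by
  ext x y
  by_cases hx : x = i
  · subst hx; simp [h]
  · have hxp : ρ x ≠ p := fun hxp => hx (hρ (hxp.trans h.symm))
    simp [hx, hxp]

theorem submatrix_updateRow_of_forall_ne (A : Matrix m n α) {ρ : l → m} {p : m}
    (h : ∀ i, ρ i ≠ p) (v : n → α) (γ : l → n) :
    (A.updateRow p v).submatrix ρ γ = A.submatrix ρ γ := by
  ext x y
  simp [h x]

theorem det_succ_of_col_zero_eq_zero {r : ℕ}
    (A : Matrix (Fin (r + 1)) (Fin (r + 1)) R) (h : ∀ i : Fin r, A i.succ 0 = 0) :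
    A.det = A 0 0 * (A.submatrix Fin.succ Fin.succ).det := by
  simp [det_succ_column_zero A, Fin.sum_univ_succ, h]

end Matrix

def TNNUpTo (N : ℕ) (A : Matrix ℕ ℕ ℝ) : Prop :=
  ∀ (r : ℕ) (ρ γ : Fin r → ℕ), StrictMono ρ → StrictMono γ → (∀ i, ρ i ≤ N) → (∀ l, γ l ≤ N) →
    0 ≤ (A.submatrix ρ γ).det

theorem tnn_submatrix_val_iff {N : ℕ} {A : Matrix ℕ ℕ ℝ} :
    TNN (A.submatrix (Fin.val : Fin (N + 1) → ℕ) Fin.val) ↔ TNNUpTo N A := by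
  constructor
  · intro h r ρ γ hρ hγ hρN hγN
    have := h r (fun i => ⟨ρ i, Nat.lt_succ_of_le (hρN i)⟩)
      (fun l => ⟨γ l, Nat.lt_succ_of_le (hγN l)⟩) (fun _ _ hxy => hρ hxy) (fun _ _ hxy => hγ hxy)
    rwa [Matrix.submatrix_submatrix] at this
  · intro h r ρ γ hρ hγ
    simpa using h r (Fin.val ∘ ρ) (Fin.val ∘ γ) (Fin.val_strictMono.comp hρ)
      (Fin.val_strictMono.comp hγ) (fun i => Fin.is_le (ρ i)) (fun l => Fin.is_le (γ l))

theorem tnnUpTo_zero {A : Matrix ℕ ℕ ℝ} (h : 0 ≤ A 0 0) : TNNUpTo 0 A := by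
  intro r ρ γ hρ _ hρN hγN
  match r with
  | 0 => simp
  | 1 => simpa [Matrix.det_fin_one, Nat.le_zero.1 (hρN 0), Nat.le_zero.1 (hγN 0)] using h
  | _ + 2 =>
    have := hρ (show (0 : Fin (_ + 2)) < 1 from Fin.zero_lt_one)
    have := hρN 1
    omega

theorem TNNUpTo.updateRow_add_smul {N : ℕ} {A : Matrix ℕ ℕ ℝ} (hA : TNNUpTo N A) {c : ℝ}
    (hc : 0 ≤ c) (q : ℕ) : TNNUpTo N (A.updateRow (q + 1) (A (q + 1) + c • A q)) := by
  intro r ρ γ hρ hγ hρN hγN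
  by_cases hp : ∃ i, ρ i = q + 1
  swap
  · simp only [not_exists] at hp
    rw [A.submatrix_updateRow_of_forall_ne hp]
    exact hA r ρ γ hρ hγ hρN hγN
  obtain ⟨i, hi⟩ := hp
  set ρ' := Function.update ρ i q
  have hsplit : ((A.updateRow (q + 1) (A (q + 1) + c • A q)).submatrix ρ γ).det =
      (A.submatrix ρ γ).det + c * (A.submatrix ρ' γ).det := by
    have hrow : (A (q + 1) + c • A q) ∘ γ = A.submatrix ρ γ i + c • (A q ∘ γ) := by
      funext l; simp [hi]
    have hρ' : (A.submatrix ρ γ).updateRow i (A q ∘ γ) = A.submatrix ρ' γ := by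
      ext x y; by_cases hx : x = i <;> simp [ρ', hx]
    rw [A.submatrix_updateRow_of_eq hρ.injective hi, hrow, Matrix.det_updateRow_add,
      Matrix.det_updateRow_smul, Matrix.updateRow_eq_self, hρ']
  -- `ρ'` is still monotone since `q` sits just below `ρ i = q + 1`; if it is not injective
  -- the minor has two equal rows.
  have hmono : Monotone ρ' := by
    intro x y hxy
    rcases hxy.lt_or_eq with hxy | rfl
    · have := hρ hxy
      simp only [ρ', Function.update_apply]
      split_ifs with hx hy hy
      · rfl
      · subst hx; omega
      · subst hy; omega
      · exact this.le
    · rfl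
  have hminor : 0 ≤ (A.submatrix ρ' γ).det := by
    by_cases hinj : Function.Injective ρ'
    · refine hA r ρ' γ (hmono.strictMono_of_injective hinj) hγ (fun x => ?_) hγN
      have := hρN x
      have := hρN i
      simp only [ρ', Function.update_apply]
      split_ifs <;> omega
    · obtain ⟨x, y, hxy, hne⟩ : ∃ x y, ρ' x = ρ' y ∧ x ≠ y := by
        simpa [Function.Injective] using hinj
      rw [Matrix.det_zero_of_row_eq hne (by ext; simp [hxy])]
  rw [hsplit]
  exact add_nonneg (hA r ρ γ hρ hγ hρN hγN) (mul_nonneg hc hminor)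

theorem padOne_submatrix_of_pos (B : Matrix ℕ ℕ R) {r : ℕ} {ρ γ : Fin r → ℕ}
    (hρ : ∀ i, 0 < ρ i) (hγ : ∀ l, 0 < γ l) :
    (padOne B).submatrix ρ γ = B.submatrix (fun i => ρ i - 1) (fun l => γ l - 1) := by
  ext i l
  obtain ⟨p, hp⟩ := Nat.exists_eq_add_of_lt (hρ i)
  obtain ⟨k, hk⟩ := Nat.exists_eq_add_of_lt (hγ l)
  simp [hp, hk]

theorem StrictMono.sub_one {r : ℕ} {ρ : Fin r → ℕ} (hρ : StrictMono ρ) (hpos : ∀ i, 0 < ρ i) :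
    StrictMono fun i => ρ i - 1 :=
  fun x y hxy => show ρ x - 1 < ρ y - 1 by have := hρ hxy; have := hpos x; omega

theorem tnnUpTo_succ_padOne {N : ℕ} {B : Matrix ℕ ℕ ℝ} (hB : TNNUpTo N B) :
    TNNUpTo (N + 1) (padOne B) := by
  have hpos : ∀ r (ρ γ : Fin r → ℕ), StrictMono ρ → StrictMono γ → (∀ i, ρ i ≤ N + 1) →
      (∀ l, γ l ≤ N + 1) → (∀ i, 0 < ρ i) → (∀ l, 0 < γ l) →
      0 ≤ ((padOne B).submatrix ρ γ).det := by
    intro r ρ γ hρ hγ hρN hγN hρ0 hγ0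
    rw [padOne_submatrix_of_pos B hρ0 hγ0]
    exact hB r _ _ (hρ.sub_one hρ0) (hγ.sub_one hγ0) (fun i => by have := hρN i; omega)
      (fun l => by have := hγN l; omega)
  intro r ρ γ hρ hγ hρN hγN
  cases r with
  | zero => simp
  | succ r =>
    have hρ_succ (i : Fin r) : 0 < ρ i.succ := (Nat.zero_le _).trans_lt (hρ i.succ_pos)
    have hγ_succ (l : Fin r) : 0 < γ l.succ := (Nat.zero_le _).trans_lt (hγ l.succ_pos)
    have hρ_ge (i : Fin (r + 1)) : ρ 0 ≤ ρ i := hρ.monotone (Fin.zero_le i)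
    have hγ_ge (l : Fin (r + 1)) : γ 0 ≤ γ l := hγ.monotone (Fin.zero_le l)
    rcases Nat.eq_zero_or_pos (ρ 0) with hρ0 | hρ0 <;>
      rcases Nat.eq_zero_or_pos (γ 0) with hγ0 | hγ0
    · have hcol (i : Fin r) : (padOne B).submatrix ρ γ i.succ 0 = 0 := by
        obtain ⟨p, hp⟩ := Nat.exists_eq_add_of_lt (hρ_succ i)
        simp [hp, hγ0]
      rw [Matrix.det_succ_of_col_zero_eq_zero _ hcol, Matrix.submatrix_submatrix]
      simpa [hρ0, hγ0] using hpos r _ _ (hρ.comp Fin.strictMono_succ) (hγ.comp Fin.strictMono_succ)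
        (fun _ => hρN _) (fun _ => hγN _) hρ_succ hγ_succ
    · rw [Matrix.det_eq_zero_of_row_eq_zero 0 fun l => ?_]
      obtain ⟨k, hk⟩ := Nat.exists_eq_add_of_lt (hγ0.trans_le (hγ_ge l))
      simp [hρ0, hk]
    · rw [Matrix.det_eq_zero_of_column_eq_zero 0 fun i => ?_]
      obtain ⟨p, hp⟩ := Nat.exists_eq_add_of_lt (hρ0.trans_le (hρ_ge i))
      simp [hγ0, hp]
    · exact hpos _ ρ γ hρ hγ hρN hγN (fun i => hρ0.trans_le (hρ_ge i))
        (fun l => hγ0.trans_le (hγ_ge l))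

def mixRows (t : ℕ) (A V : Matrix ℕ ℕ R) : Matrix ℕ ℕ R :=
  Matrix.of fun p => if p ≤ t then A p else V p

theorem mixRows_succ {A V : Matrix ℕ ℕ R} {t : ℕ} {c : R} (h : A (t + 1) = V (t + 1) + c • A t) :
    mixRows (t + 1) A V =
      (mixRows t A V).updateRow (t + 1) (mixRows t A V (t + 1) + c • mixRows t A V t) := by
  ext p k
  by_cases hp : p = t + 1
  · subst hp; simp [mixRows, h]
  · have : p ≤ t + 1 ↔ p ≤ t := by omega
    simp [mixRows, Matrix.updateRow_apply, hp, this]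

theorem TNNUpTo.of_rows {N : ℕ} {A V : Matrix ℕ ℕ ℝ} {c : ℕ → ℝ} (hV : TNNUpTo N V)
    (h0 : A 0 = V 0) (hc : ∀ q, 0 ≤ c q) (hrow : ∀ q < N, A (q + 1) = V (q + 1) + c q • A q) :
    TNNUpTo N A := by
  have hmix : ∀ t ≤ N, TNNUpTo N (mixRows t A V) := by
    intro t ht
    induction t with
    | zero =>
      convert hV using 1
      ext p k
      rcases p with _ | p <;> simp [mixRows, h0]
    | succ t ih =>
      rw [mixRows_succ (hrow t ht)]
      exact (ih (by omega)).updateRow_add_smul (hc t) t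
  intro r ρ γ hρ hγ hρN hγN
  have hsub : (mixRows N A V).submatrix ρ γ = A.submatrix ρ γ := by
    ext i l
    simp [mixRows, hρN i]
  rw [← hsub]
  exact hmix N le_rfl r ρ γ hρ hγ hρN hγN

def HasNegConsecMinor (N : ℕ) (A : Matrix ℕ ℕ ℝ) : Prop :=
  ∃ (m r : ℕ) (γ : Fin (r + 1) → ℕ), m + r ≤ N ∧ StrictMono γ ∧ (∀ l, γ l ≤ N) ∧
    (A.submatrix (fun i : Fin (r + 1) => m + i) γ).det < 0

theorem HasNegConsecMinor.not_tnnUpTo {N : ℕ} {A : Matrix ℕ ℕ ℝ} (h : HasNegConsecMinor N A) :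
    ¬ TNNUpTo N A := by
  obtain ⟨m, r, γ, hmr, hγ, hγN, hdet⟩ := h
  intro hA
  have := hA _ (fun i : Fin (r + 1) => m + i) γ (fun x y hxy => by simpa using hxy) hγ
    (fun i => by have := i.is_le; omega) hγN
  linarith

theorem det_submatrix_updateRow_add_smul (B : Matrix ℕ ℕ R) {m s : ℕ} (hms : m ≤ s) (c : R)
    {r : ℕ} (γ : Fin r → ℕ) :
    ((B.updateRow (s + 1) (B (s + 1) + c • B s)).submatrix (fun i : Fin r => m + i) γ).det =
      (B.submatrix (fun i : Fin r => m + i) γ).det := by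
  have hinj : Function.Injective fun i : Fin r => m + i := fun x y h => Fin.ext (by simpa using h)
  by_cases hs : s + 1 < m + r
  · let i₀ : Fin r := ⟨s + 1 - m, by omega⟩
    let i₁ : Fin r := ⟨s - m, by omega⟩
    set S := B.submatrix (fun i : Fin r => m + i) γ
    have hrow : (B (s + 1) + c • B s) ∘ γ = S i₀ + c • S i₁ := by
      funext l
      simp [S, i₀, i₁, Nat.add_sub_cancel' hms, Nat.add_sub_cancel' (hms.trans s.le_succ)]
    rw [B.submatrix_updateRow_of_eq hinj (i := i₀) (by simp [i₀]; omega), hrow,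
      Matrix.det_updateRow_add_smul_self _ (by simp [i₀, i₁, Fin.ext_iff]; omega)]
  · rw [B.submatrix_updateRow_of_forall_ne fun i => by omega]

theorem det_submatrix_consec_eq_mixRows {N : ℕ} {A V : Matrix ℕ ℕ R} {c : ℕ → R}
    (hrow : ∀ q < N, A (q + 1) = V (q + 1) + c q • A q) {m r : ℕ} (hmr : m + r ≤ N)
    (γ : Fin (r + 1) → ℕ) :
    (A.submatrix (fun i : Fin (r + 1) => m + i) γ).det =
      ((mixRows m A V).submatrix (fun i : Fin (r + 1) => m + i) γ).det := by
  have hmix : ∀ t, m ≤ t → t ≤ N →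
      ((mixRows t A V).submatrix (fun i : Fin (r + 1) => m + i) γ).det =
      ((mixRows m A V).submatrix (fun i : Fin (r + 1) => m + i) γ).det := by
    intro t hmt htN
    induction t, hmt using Nat.le_induction with
    | base => rfl
    | succ t hmt ih =>
      rw [mixRows_succ (hrow t (by omega)), det_submatrix_updateRow_add_smul _ hmt,
        ih (by omega)]
  rw [← hmix N (by omega) le_rfl]
  congr 1
  ext i l
  simp [mixRows, show m + (i : ℕ) ≤ N by omega]

theorem HasNegConsecMinor.of_rows {N : ℕ} {A B : Matrix ℕ ℕ ℝ} {c : ℕ → ℝ}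
    (hrow : ∀ q < N + 1, A (q + 1) = padOne B (q + 1) + c q • A q)
    (hpivot : ∀ m, c m = 0 ∨ 0 < A m 0) (hB : HasNegConsecMinor N B) :
    HasNegConsecMinor (N + 1) A := by
  obtain ⟨m, r, γ, hmr, hγ, hγN, hdet⟩ := hB
  have hshift : (padOne B).submatrix (fun i : Fin (r + 1) => m + 1 + i) (fun l => γ l + 1) =
      B.submatrix (fun i : Fin (r + 1) => m + i) γ := by
    ext i l
    simp [Nat.add_right_comm m 1]
  have hγ' : StrictMono fun l => γ l + 1 := fun x y hxy => Nat.add_lt_add_right (hγ hxy) 1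
  rcases hpivot m with hc | hpos
  · -- Row `m + 1` of `A` is already row `m + 1` of `padOne B`.
    refine ⟨m + 1, r, fun l => γ l + 1, by omega, hγ', fun l => Nat.succ_le_succ (hγN l), ?_⟩
    have hmix : (mixRows (m + 1) A (padOne B)).submatrix (fun i : Fin (r + 1) => m + 1 + i)
        (fun l => γ l + 1) = (padOne B).submatrix (fun i : Fin (r + 1) => m + 1 + i)
        (fun l => γ l + 1) := by
      ext i l
      by_cases hi : (i : ℕ) = 0
      · simp [mixRows, hi, hrow m (by omega), hc]
      · simp [mixRows, show ¬ m + 1 + (i : ℕ) ≤ m + 1 by omega]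
    rwa [det_submatrix_consec_eq_mixRows hrow (by omega), hmix, hshift]
  · -- Otherwise border the minor by row `m` and column `0`, where `A` has a positive pivot.
    refine ⟨m, r + 1, Fin.cons 0 fun l => γ l + 1, by omega,
      Fin.strictMono_cons.2 ⟨fun _ => Nat.succ_pos _, hγ'⟩,
      Fin.cases (Nat.zero_le _) fun l => Nat.succ_le_succ (hγN l), ?_⟩
    have hcol (i : Fin (r + 1)) :
        (mixRows m A (padOne B)).submatrix (fun i : Fin (r + 2) => m + i)
          (Fin.cons 0 fun l => γ l + 1) i.succ 0 = 0 := by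
      simp [mixRows, ← add_assoc]
    have hsucc : ((mixRows m A (padOne B)).submatrix (fun i : Fin (r + 2) => m + i)
        (Fin.cons 0 fun l => γ l + 1)).submatrix Fin.succ Fin.succ =
        (padOne B).submatrix (fun i : Fin (r + 1) => m + 1 + i) (fun l => γ l + 1) := by
      ext i l
      simp [mixRows, Nat.add_assoc, Nat.add_comm 1]
    rw [det_submatrix_consec_eq_mixRows hrow (by omega), Matrix.det_succ_of_col_zero_eq_zero _ hcol,
      hsucc, hshift]
    simpa [mixRows] using mul_neg_of_pos_of_neg hpos hdet

theorem hasNegConsecMinor_newtonMatrix {a e : ℕ → ℝ} {N j : ℕ} (hj : j ≤ N)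
    (hlt : ∀ i < j, e i < a 0) (hx : a 0 < e j) : HasNegConsecMinor (N + 1) (newtonMatrix a e) := by
  refine ⟨j + 1, 0, fun _ => 0, by omega, Fin.strictMono_iff_lt_succ.2 finZeroElim,
    fun _ => Nat.zero_le _, ?_⟩
  rw [Matrix.det_fin_one, Matrix.submatrix_apply, Fin.val_zero, add_zero, newtonMatrix_col_zero,
    prod_range_succ, ← newtonMatrix_col_zero]
  exact mul_neg_of_pos_of_neg (newtonMatrix_col_zero_pos hlt le_rfl) (sub_neg.2 hx)

theorem exists_newtonMatrix_rows_eraseAt {a e : ℕ → ℝ} {N j : ℕ} (hlt : ∀ i < j, e i < a 0)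
    (hj : j = N + 1 ∨ j ≤ N ∧ e j = a 0) :
    ∃ c : ℕ → ℝ, (∀ q, 0 ≤ c q) ∧ (∀ m, c m = 0 ∨ 0 < newtonMatrix a e m 0) ∧
      ∀ q < N + 1, newtonMatrix a e (q + 1) =
        padOne (newtonMatrix (fun i => a (i + 1)) (eraseAt e j)) (q + 1) +
          c q • newtonMatrix a e q := by
  refine ⟨fun q => if q < j then a 0 - e q else 0, fun q => ?_, fun m => ?_, fun q hq =>
    newtonMatrix_succ_eraseAt a e (hj.imp (fun h : j = N + 1 => h ▸ hq) And.right)⟩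
  · by_cases hq : q < j
    · simpa [hq] using (hlt q hq).le
    · simp [hq]
  · by_cases hm : m < j
    · exact Or.inr (newtonMatrix_col_zero_pos hlt hm.le)
    · exact Or.inl (if_neg hm)

theorem tnnUpTo_newtonMatrix_and_hasNegConsecMinor (N : ℕ) (a e : ℕ → ℝ) :
    (IsRGGen N a e → TNNUpTo N (newtonMatrix a e)) ∧
      (¬ IsRGGen N a e → HasNegConsecMinor N (newtonMatrix a e)) := by
  induction N generalizing a e with
  | zero =>
    refine ⟨fun _ => tnnUpTo_zero (newtonMatrix_col_zero_pos (j := 0) (by simp) le_rfl).le,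
      fun h => absurd rfl h⟩
  | succ N ih =>
    obtain ⟨j, hlt, ⟨hjN, hfail⟩ | hj⟩ := exists_first_not_lt (a 0) e N
    · exact ⟨fun h => absurd h (not_isRGGen_succ hjN hlt hfail),
        fun _ => hasNegConsecMinor_newtonMatrix hjN hlt hfail⟩
    obtain ⟨c, hc, hpivot, hrow⟩ := exists_newtonMatrix_rows_eraseAt hlt hj
    obtain ⟨ih_tnn, ih_neg⟩ := ih (fun i => a (i + 1)) (eraseAt e j)
    rw [isRGGen_succ_iff hlt hj]
    exact ⟨fun h => (tnnUpTo_succ_padOne (ih_tnn h)).of_rows (newtonMatrix_zero a e _) hc hrow,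
      fun h => (ih_neg h).of_rows hrow hpivot⟩

theorem tnnUpTo_newtonMatrix_iff (N : ℕ) (a e : ℕ → ℝ) :
    TNNUpTo N (newtonMatrix a e) ↔ IsRGGen N a e := by
  obtain ⟨htnn, hneg⟩ := tnnUpTo_newtonMatrix_and_hasNegConsecMinor N a e
  exact ⟨fun h => by_contra fun hRG => (hneg hRG).not_tnnUpTo h, htnn⟩

theorem statement0 (n : ℕ) (a e : ℕ → ℝ)
    (M : Matrix (Fin (n+1)) (Fin (n+1)) ℝ) (hM : IsCOB n a e M) :
    TNN M ↔ IsRGGen n a e := by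
  rw [hM.eq_submatrix, tnn_submatrix_val_iff, tnnUpTo_newtonMatrix_iff]
end

section
/- Let a=(a_1,...,a_n) and e=(e_1,...,e_n) be real sequences, and write M(m,k) for the (m,k) entry of M_{e→a}. Then for all 0 ≤ k ≤ m ≤ n, M(m,k) = Σ ∏_{i=1}^{m-k} (a_{s_i - i + 1} - e_{s_i}), where the sum is over all subsets S = {s_1 < s_2 < ... < s_{m-k}} of {1,...,m} of size m-k. -/
open Polynomial Finset

/-! Multiply out `∏ (x - e_i)` one factor at a time. A term `c · ∏_{i ≤ k} (x - a_i)` times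
`x - e_m = (x - a_{k+1}) + (a_{k+1} - e_m)` either extends the Newton polynomial or picks up the
scalar `a_{k+1} - e_m`. If `S = {s_1 < ⋯ < s_d}` records the steps at which the scalar was taken,
then before step `s_i` exactly `s_i - i` extensions have happened, so that scalar is
`a_{s_i - i + 1} - e_{s_i}`. Thus the subset sums obey the same Pascal-type recurrence as the
coefficients, and the coefficients are unique because the Newton polynomials have distinct
degrees. -/

section NewtonExpansion

variable {R : Type*} [CommRing R]

noncomputable def newtonPoly (a : ℕ → R) (k : ℕ) : R[X] :=
  ∏ i ∈ range k, (X - C (a i))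

lemma newtonPoly_mul_X_sub_C (a : ℕ → R) (k : ℕ) (c : R) :
    newtonPoly a k * (X - C c) = newtonPoly a (k + 1) + C (a k - c) * newtonPoly a k := by
  rw [newtonPoly, newtonPoly, prod_range_succ, map_sub]
  ring

lemma degree_newtonPoly [Nontrivial R] (a : ℕ → R) (k : ℕ) : (newtonPoly a k).degree = k := by
  have hmonic : ∀ i ∈ range k, (X - C (a i)).Monic := fun i _ ↦ monic_X_sub_C (a i)
  rw [newtonPoly, degree_eq_natDegree (monic_prod_of_monic _ _ hmonic).ne_zero,
    natDegree_prod_of_monic _ _ hmonic]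
  simp

lemma linearIndependent_newtonPoly [IsDomain R] (a : ℕ → R) :
    LinearIndependent R (newtonPoly a) :=
  Polynomial.Sequence.linearIndependent ⟨newtonPoly a, degree_newtonPoly a⟩

variable (a e : ℕ → R)

/-- In the paper's 1-based notation `S = {s_1 < ⋯ < s_d}` has weight
`∏ᵢ (a_{s_i - i + 1} - e_{s_i})`; here `a` and `e` are 0-based and the index `i` of `s ∈ S` is its
rank `#{y ∈ S | y ≤ s}`. -/
noncomputable def subsetWeight (S : Finset ℕ) : R :=
  ∏ s ∈ S, (a (s - #{y ∈ S | y ≤ s}) - e (s - 1))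

noncomputable def weightSum (d m : ℕ) : R :=
  ∑ S ∈ (Icc 1 m).powersetCard d, subsetWeight a e S

lemma weightSum_zero (m : ℕ) : weightSum a e 0 m = 1 := by
  simp [weightSum, subsetWeight]

lemma weightSum_eq_zero_of_lt {d m : ℕ} (h : m < d) : weightSum a e d m = 0 := by
  rw [weightSum, powersetCard_eq_empty.2 (by simpa using h), sum_empty]

lemma subsetWeight_insert {S : Finset ℕ} {d k : ℕ} (hS : S ⊆ Icc 1 (d + k)) (hc : #S = d) :
    subsetWeight a e (insert (d + k + 1) S) = (a k - e (d + k)) * subsetWeight a e S := by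
  have hle : ∀ y ∈ S, y ≤ d + k := fun y hy ↦ (mem_Icc.mp (hS hy)).2
  have hnotMem : d + k + 1 ∉ S := fun h ↦ by have := hle _ h; omega
  have hrank : ∀ s ∈ S, #{y ∈ insert (d + k + 1) S | y ≤ s} = #{y ∈ S | y ≤ s} := fun s hs ↦ by
    rw [filter_insert, if_neg (by have := hle s hs; omega)]
  rw [subsetWeight, prod_insert hnotMem, prod_congr rfl fun s hs ↦ by rw [hrank s hs],
    filter_true_of_mem fun y hy ↦ ?_, card_insert_of_notMem hnotMem, hc]
  · congr 3
    omega
  · rcases mem_insert.mp hy with rfl | hy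
    · rfl
    · have := hle y hy; omega

lemma weightSum_succ_succ (d k : ℕ) :
    weightSum a e (d + 1) (d + k + 1) =
      weightSum a e (d + 1) (d + k) + (a k - e (d + k)) * weightSum a e d (d + k) := by
  have hnotMem : d + k + 1 ∉ Icc 1 (d + k) := by simp
  rw [weightSum, ← insert_Icc_right_eq_Icc_add_one (by omega), powersetCard_succ_insert hnotMem,
    sum_union, sum_image, weightSum, weightSum, mul_sum]
  · congr 1
    refine sum_congr rfl fun S hS ↦ ?_
    exact subsetWeight_insert a e (mem_powersetCard.mp hS).1 (mem_powersetCard.mp hS).2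
  · exact insert_erase_invOn.2.injOn.mono fun S hS ↦
      notMem_mono (mem_powersetCard.mp hS).1 hnotMem
  · aesop (add simp [disjoint_left, insert_subset_iff])

theorem prod_X_sub_C_eq_sum_antidiagonal (m : ℕ) :
    ∏ i ∈ range m, (X - C (e i)) =
      ∑ p ∈ antidiagonal m, C (weightSum a e p.1 m) * newtonPoly a p.2 := by
  induction m with
  | zero => simp [weightSum_zero, newtonPoly]
  | succ m ih =>
    set f : ℕ × ℕ → R[X] := fun p ↦ C (weightSum a e p.1 m) * newtonPoly a p.2
    have hshift : ∑ p ∈ antidiagonal m, f (p.1, p.2 + 1) =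
        newtonPoly a (m + 1) + ∑ p ∈ antidiagonal m, f (p.1 + 1, p.2) := by
      -- both sides are `∑ p ∈ antidiagonal (m + 1), f p` with a corner split off, and the corner
      -- terms are `weightSum a e (m + 1) m = 0` and `weightSum a e 0 m = 1`
      have h := (Nat.sum_antidiagonal_succ' (n := m) (f := f)).symm.trans
        Nat.sum_antidiagonal_succ
      simpa [f, weightSum_zero, weightSum_eq_zero_of_lt] using h
    have hstep : ∀ p ∈ antidiagonal m, C (weightSum a e (p.1 + 1) (m + 1)) * newtonPoly a p.2 =
        f (p.1 + 1, p.2) + C (a p.2 - e m) * f p := by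
      intro p hp
      obtain rfl := mem_antidiagonal.mp hp
      simp only [f, weightSum_succ_succ, map_add, map_mul]
      ring
    calc ∏ i ∈ range (m + 1), (X - C (e i))
        = ∑ p ∈ antidiagonal m, f p * (X - C (e m)) := by rw [prod_range_succ, ih, sum_mul]
      _ = ∑ p ∈ antidiagonal m, (f (p.1, p.2 + 1) + C (a p.2 - e m) * f p) :=
        sum_congr rfl fun p _ ↦ by
          simp only [f, mul_assoc, newtonPoly_mul_X_sub_C a]
          ring
      _ = newtonPoly a (m + 1) +
          ∑ p ∈ antidiagonal m, (f (p.1 + 1, p.2) + C (a p.2 - e m) * f p) := by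
        rw [sum_add_distrib, hshift, sum_add_distrib, add_assoc]
      _ = ∑ p ∈ antidiagonal (m + 1), C (weightSum a e p.1 (m + 1)) * newtonPoly a p.2 := by
        rw [Nat.sum_antidiagonal_succ, sum_congr rfl hstep, weightSum_zero, map_one, one_mul]

theorem prod_X_sub_C_eq_sum_fin {n m : ℕ} (hm : m ≤ n) :
    ∏ i ∈ range m, (X - C (e i)) =
      ∑ k : Fin (n + 1),
        C (if (k : ℕ) ≤ m then weightSum a e (m - k) m else 0) * newtonPoly a k := by
  rw [prod_X_sub_C_eq_sum_antidiagonal a e, ← Nat.sum_antidiagonal_swap,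
    Nat.sum_antidiagonal_eq_sum_range_succ_mk,
    Fin.sum_univ_eq_sum_range (fun k ↦ C (if k ≤ m then weightSum a e (m - k) m else 0) *
      newtonPoly a k)]
  refine sum_subset_zero_on_sdiff (range_subset_range.mpr (by omega)) (fun k hk ↦ ?_)
    (fun k hk ↦ ?_)
  · rw [if_neg (by simp at hk; omega), map_zero, zero_mul]
  · rw [if_pos (by simpa [Nat.lt_succ_iff] using hk)]
    rfl

lemma card_filter_le_orderEmbOfFin {α : Type*} [LinearOrder α] (S : Finset α) {d : ℕ}
    (hc : #S = d) (j : Fin d) : #{y ∈ S | y ≤ S.orderEmbOfFin hc j} = j + 1 := by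
  have himg : {y ∈ S | y ≤ S.orderEmbOfFin hc j} = (Iic j).image (S.orderEmbOfFin hc) := by
    ext x
    simp only [mem_filter, mem_image, mem_Iic]
    constructor
    · rintro ⟨hxS, hxle⟩
      obtain ⟨i, rfl⟩ : x ∈ Set.range (S.orderEmbOfFin hc) := by rwa [range_orderEmbOfFin]
      exact ⟨i, (S.orderEmbOfFin hc).le_iff_le.mp hxle, rfl⟩
    · rintro ⟨i, hij, rfl⟩
      exact ⟨orderEmbOfFin_mem S hc i, (S.orderEmbOfFin hc).le_iff_le.mpr hij⟩
  rw [himg, card_image_of_injective _ (S.orderEmbOfFin hc).injective, Fin.card_Iic]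

lemma prod_orderEmbOfFin_eq_subsetWeight (S : Finset ℕ) {d : ℕ} (hc : #S = d) :
    ∏ j : Fin d, (a (S.orderEmbOfFin hc j - j - 1) - e (S.orderEmbOfFin hc j - 1)) =
      subsetWeight a e S := by
  set g : ℕ → R := fun s ↦ a (s - #{y ∈ S | y ≤ s}) - e (s - 1)
  calc _ = ∏ j : Fin d, g (S.orderIsoOfFin hc j) := by
        refine prod_congr rfl fun j _ ↦ ?_
        simp only [g, coe_orderIsoOfFin_apply, card_filter_le_orderEmbOfFin, Nat.sub_sub]
    _ = ∏ s : S, g s := (S.orderIsoOfFin hc).toEquiv.prod_comp (g ∘ (↑))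
    _ = subsetWeight a e S := prod_coe_sort S g

end NewtonExpansion

theorem statement6 (n : ℕ) (a e : ℕ → ℝ)
    (M : Matrix (Fin (n+1)) (Fin (n+1)) ℝ) (hM : IsCOB n a e M)
    (m k : ℕ) (hk : k ≤ m) (hm : m ≤ n) :
    M ⟨m, by omega⟩ ⟨k, by omega⟩ =
      ∑ S ∈ ((Finset.Icc 1 m).powersetCard (m - k)).attach,
        ∏ j : Fin (m - k),
          (a (S.1.orderEmbOfFin (Finset.mem_powersetCard.mp S.2).2 j - (j : ℕ) - 1) -
            e (S.1.orderEmbOfFin (Finset.mem_powersetCard.mp S.2).2 j - 1)) := by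
  have hexpand := (hM ⟨m, by omega⟩).symm.trans (prod_X_sub_C_eq_sum_fin a e hm)
  simp only [C_mul'] at hexpand
  have hcoeff := ((linearIndependent_newtonPoly a).comp _ Fin.val_injective).eq_coords_of_eq
    hexpand ⟨k, by omega⟩
  rw [hcoeff, if_pos hk, weightSum, ← sum_attach]
  exact sum_congr rfl fun S _ ↦ (prod_orderEmbOfFin_eq_subsetWeight a e S.1 _).symm
end

section
/- For every n, the (n+1)×(n+1) matrix whose (m,k) entry (0 ≤ m,k ≤ n) is the binomial coefficient C(m,k) is totally non-negative. -/
/-!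
The Pascal matrix of size `N + 1` arises from `diag(1, pascal N)` by adding, for
`s = 0, 1, …, N - 1` in turn, row `s` to row `s + 1`: once rows `0, …, s` are Pascal rows,
Pascal's rule `C(s+1, k) = C(s, k-1) + C(s, k)` turns the shifted row `s + 1` into a Pascal row.
Both `A ↦ diag(1, A)` and such a row addition preserve total non-negativity. For the latter,
multilinearity splits a minor through row `s + 1` into the same minor plus the minor with
row `s + 1` replaced by row `s`; that one either repeats a row or is again a minor with increasing
row indices, since no selected row lies strictly between `s` and `s + 1`.
-/

open Polynomial Finset

lemma Fin.castSucc_covBy_succ {n : ℕ} (k : Fin n) : k.castSucc ⋖ k.succ :=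
  ⟨Fin.castSucc_lt_succ, fun c h₁ h₂ => by
    rw [Fin.lt_def] at h₁ h₂
    simp only [Fin.val_castSucc, Fin.val_succ] at h₁ h₂
    omega⟩

lemma StrictMono.update_of_covBy {α β : Type*} [Preorder α] [LinearOrder β] [DecidableEq α]
    {f : α → β} (hf : StrictMono f) {t : α} {b : β} (hb : b ⋖ f t) (hbf : b ∉ Set.range f) :
    StrictMono (Function.update f t b) := by
  intro x y hxy
  by_cases hx : x = t
  · subst hx
    rw [Function.update_self, Function.update_of_ne hxy.ne']
    exact hb.lt.trans (hf hxy)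
  by_cases hy : y = t
  · subst hy
    rw [Function.update_self, Function.update_of_ne hx]
    exact (hb.le_of_lt (hf hxy)).lt_of_ne fun h => hbf ⟨x, h⟩
  · rw [Function.update_of_ne hx, Function.update_of_ne hy]
    exact hf hxy

lemma exists_strictMono_eq_succ_comp {r N : ℕ} {ρ : Fin r → Fin (N + 1)} (hρ : StrictMono ρ)
    (h0 : ∀ i, ρ i ≠ 0) : ∃ ρ' : Fin r → Fin N, StrictMono ρ' ∧ ρ = Fin.succ ∘ ρ' :=
  ⟨fun i => (ρ i).pred (h0 i), fun a b hab => by simpa using hρ hab, by ext; simp⟩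

namespace Matrix

/-- The block-diagonal matrix `diag(1, A)`. -/
def oneBlock {N : ℕ} (A : Matrix (Fin N) (Fin N) ℝ) : Matrix (Fin (N + 1)) (Fin (N + 1)) ℝ :=
  of (Fin.cons (Pi.single 0 1) fun i => Fin.cons 0 (A i))

variable {N : ℕ} (A : Matrix (Fin N) (Fin N) ℝ)

@[simp] lemma oneBlock_zero_zero : A.oneBlock 0 0 = 1 := rfl

@[simp] lemma oneBlock_zero_succ (j : Fin N) : A.oneBlock 0 j.succ = 0 := rfl

@[simp] lemma oneBlock_succ_zero (i : Fin N) : A.oneBlock i.succ 0 = 0 := rfl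

@[simp] lemma oneBlock_succ_succ (i j : Fin N) : A.oneBlock i.succ j.succ = A i j := rfl

lemma oneBlock_zero_apply_of_ne {j : Fin (N + 1)} (hj : j ≠ 0) : A.oneBlock 0 j = 0 := by
  rw [← Fin.succ_pred j hj, oneBlock_zero_succ]

lemma oneBlock_apply_zero_of_ne {i : Fin (N + 1)} (hi : i ≠ 0) : A.oneBlock i 0 = 0 := by
  rw [← Fin.succ_pred i hi, oneBlock_succ_zero]

end Matrix

namespace TNN

lemma of_fin_zero (A : Matrix (Fin 0) (Fin 0) ℝ) : TNN A := by
  intro r ρ γ _ _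
  have := Function.isEmpty ρ
  simp

lemma updateRow_add_smul {N : ℕ} {A : Matrix (Fin N) (Fin N) ℝ} (hA : TNN A)
    {i j : Fin N} (hji : j ⋖ i) {c : ℝ} (hc : 0 ≤ c) :
    TNN (A.updateRow i (A i + c • A j)) := by
  intro r ρ γ hρ hγ
  by_cases hi : ∃ t, ρ t = i
  swap
  · convert hA r ρ γ hρ hγ using 2
    ext s l
    simp [Matrix.updateRow_ne fun h => hi ⟨s, h⟩]
  obtain ⟨t, rfl⟩ := hi
  set ρ' := Function.update ρ t j
  have split_row : (A.updateRow (ρ t) (A (ρ t) + c • A j)).submatrix ρ γ =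
      (A.submatrix ρ γ).updateRow t (A.submatrix ρ γ t + c • A.submatrix ρ' γ t) := by
    ext s l
    rcases eq_or_ne s t with rfl | hs
    · simp [ρ']
    · simp [Matrix.updateRow_ne hs, Matrix.updateRow_ne (hρ.injective.ne hs)]
  have replaced_row : (A.submatrix ρ γ).updateRow t (A.submatrix ρ' γ t) = A.submatrix ρ' γ := by
    ext s l
    rcases eq_or_ne s t with rfl | hs
    · simp
    · simp [Matrix.updateRow_ne hs, ρ', Function.update_of_ne hs]
  rw [split_row, Matrix.det_updateRow_add, Matrix.updateRow_eq_self, Matrix.det_updateRow_smul,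
    replaced_row]
  have hminor := hA r ρ γ hρ hγ
  by_cases hj : ∃ s, ρ s = j
  · obtain ⟨s, rfl⟩ := hj
    have hst : s ≠ t := fun h => hji.lt.ne (congrArg ρ h)
    rw [Matrix.det_zero_of_row_eq (M := A.submatrix ρ' γ) hst
      (by ext l; simp [ρ', Function.update_of_ne hst])]
    simpa using hminor
  · have := hA r ρ' γ (hρ.update_of_covBy hji fun ⟨s, hs⟩ => hj ⟨s, hs⟩) hγ
    positivity

lemma oneBlock {N : ℕ} {A : Matrix (Fin N) (Fin N) ℝ} (hA : TNN A) : TNN A.oneBlock := by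
  have minor_succ {r : ℕ} {ρ γ : Fin r → Fin (N + 1)} (hρ : StrictMono ρ) (hγ : StrictMono γ)
      (hρ0 : ∀ i, ρ i ≠ 0) (hγ0 : ∀ j, γ j ≠ 0) : 0 ≤ (A.oneBlock.submatrix ρ γ).det := by
    obtain ⟨ρ', hρ', rfl⟩ := exists_strictMono_eq_succ_comp hρ hρ0
    obtain ⟨γ', hγ', rfl⟩ := exists_strictMono_eq_succ_comp hγ hγ0
    exact hA _ ρ' γ' hρ' hγ'
  intro r ρ γ hρ hγ
  cases r with
  | zero => simp
  | succ r =>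
  have ne_zero_of_head {f : Fin (r + 1) → Fin (N + 1)} (hf : StrictMono f) (h : f 0 ≠ 0) (i) :
      f i ≠ 0 :=
    (lt_of_lt_of_le (Fin.pos_of_ne_zero h) (hf.monotone (Fin.zero_le i))).ne'
  have tail_ne_zero {f : Fin (r + 1) → Fin (N + 1)} (hf : StrictMono f) (i : Fin r) :
      f i.succ ≠ 0 :=
    (lt_of_le_of_lt (Fin.zero_le _) (hf (Fin.succ_pos i))).ne'
  by_cases hρ0 : ρ 0 = 0 <;> by_cases hγ0 : γ 0 = 0
  · -- expand along row `0`, whose only non-zero entry is the corner `1`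
    have first_row (j : Fin (r + 1)) (hj : j ≠ 0) : A.oneBlock (ρ 0) (γ j) = 0 := by
      rw [← Fin.succ_pred j hj, hρ0]
      exact A.oneBlock_zero_apply_of_ne (tail_ne_zero hγ _)
    rw [Matrix.det_succ_row_zero, Finset.sum_eq_single 0 (fun j _ hj => by simp [first_row j hj])
      (by simp)]
    simpa [hρ0, hγ0] using minor_succ (hρ.comp Fin.strictMono_succ) (hγ.comp Fin.strictMono_succ)
      (tail_ne_zero hρ) (tail_ne_zero hγ)
  · refine (Matrix.det_eq_zero_of_row_eq_zero 0 fun j => ?_).ge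
    simp [hρ0, A.oneBlock_zero_apply_of_ne (ne_zero_of_head hγ hγ0 j)]
  · refine (Matrix.det_eq_zero_of_column_eq_zero 0 fun i => ?_).ge
    simp [hγ0, A.oneBlock_apply_zero_of_ne (ne_zero_of_head hρ hρ0 i)]
  · exact minor_succ hρ hγ (ne_zero_of_head hρ hρ0) (ne_zero_of_head hγ hγ0)

end TNN

def pascal (N : ℕ) : Matrix (Fin N) (Fin N) ℝ :=
  Matrix.of fun m k => ((m : ℕ).choose (k : ℕ) : ℝ)

lemma pascal_row_zero (N : ℕ) : pascal (N + 1) 0 = (pascal N).oneBlock 0 := by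
  ext k
  cases k using Fin.cases <;> simp [pascal]

lemma pascal_row_succ {N : ℕ} (m : Fin N) :
    pascal (N + 1) m.succ = (pascal N).oneBlock m.succ + pascal (N + 1) m.castSucc := by
  ext k
  cases k using Fin.cases <;> simp [pascal, Nat.choose_succ_succ']

def pascalUpTo (N s : ℕ) : Matrix (Fin (N + 1)) (Fin (N + 1)) ℝ :=
  Matrix.of fun m k => if (m : ℕ) ≤ s then pascal (N + 1) m k else (pascal N).oneBlock m k

lemma pascalUpTo_zero (N : ℕ) : pascalUpTo N 0 = (pascal N).oneBlock := by
  ext m k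
  by_cases hm : m = 0
  · simp [pascalUpTo, hm, pascal_row_zero]
  · simp [pascalUpTo, Fin.val_eq_zero_iff, hm]

lemma pascalUpTo_self (N : ℕ) : pascalUpTo N N = pascal (N + 1) := by
  ext m k
  simp [pascalUpTo, Fin.is_le m]

lemma pascalUpTo_succ {N s : ℕ} (hs : s < N) :
    pascalUpTo N (s + 1) = (pascalUpTo N s).updateRow (Fin.succ ⟨s, hs⟩)
      (pascalUpTo N s (Fin.succ ⟨s, hs⟩) + pascalUpTo N s (Fin.castSucc ⟨s, hs⟩)) := by
  ext m k
  by_cases hm : m = Fin.succ ⟨s, hs⟩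
  · subst hm
    rw [Matrix.updateRow_self]
    simp only [pascalUpTo, Matrix.of_apply, Pi.add_apply]
    rw [if_pos (by simp), if_neg (by simp), if_pos (by simp), pascal_row_succ, Pi.add_apply]
  · have hms : (m : ℕ) ≤ s + 1 ↔ (m : ℕ) ≤ s := by
      have : (m : ℕ) ≠ s + 1 := fun h => hm (Fin.ext h)
      omega
    simp only [Matrix.updateRow_ne hm, pascalUpTo, Matrix.of_apply, hms]

lemma TNN.pascal_succ {N : ℕ} (hN : TNN (pascal N)) : TNN (pascal (N + 1)) := by
  have upTo (s : ℕ) (hs : s ≤ N) : TNN (pascalUpTo N s) := by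
    induction s with
    | zero => exact pascalUpTo_zero N ▸ hN.oneBlock
    | succ s ih =>
      have := (ih (by omega)).updateRow_add_smul (Fin.castSucc_covBy_succ ⟨s, hs⟩) zero_le_one
      rwa [one_smul, ← pascalUpTo_succ] at this
  exact pascalUpTo_self N ▸ upTo N le_rfl

lemma tnn_pascal : ∀ N, TNN (pascal N)
  | 0 => TNN.of_fin_zero _
  | N + 1 => (tnn_pascal N).pascal_succ

theorem statement16 (n : ℕ) :
    TNN (Matrix.of fun m k : Fin (n+1) => ((m : ℕ).choose (k : ℕ) : ℝ)) :=
  tnn_pascal (n + 1)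
end

section
/- For every n, the (n+1)×(n+1) matrix whose (m,k) entry (0 ≤ m,k ≤ n) is the Stirling number of the second kind S(m,k) is totally non-negative. -/
open Polynomial Finset

/-- `stirling2 m k`, the Stirling number of the second kind: the number of
partitions of an `m`-element set into `k` non-empty blocks. -/
noncomputable def stirling2 (m k : ℕ) : ℕ :=
  Nat.card {P : Finpartition (Finset.univ : Finset (Fin m)) // P.parts.card = k}

/-!
Deleting an element `a` from a partition of `insert a s` either removes the block `{a}` or shrinks
the block of `a`; in the second way every partition of `s` into `k + 1` blocks arises `k + 1`
times, whence `S(m+1, k+1) = S(m, k) + (k+1) S(m, k+1)`. In matrix form, the Stirling matrix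
bordered by an identity block of size `t` is the one bordered by an identity block of size `t + 1`
times the unit lower bidiagonal matrix with subdiagonal entries `j - t`, so the Stirling matrix is
a product of nonnegative lower bidiagonal matrices. Those are totally nonnegative because in any
of their minors only the identity permutation contributes, and total nonnegativity is preserved
by products thanks to the Cauchy–Binet formula.
-/

section CauchyBinet

variable {R : Type*} [CommRing R]

theorem Matrix.det_mul_eq_sum_prod_mul_det_submatrix {m n : Type*} [Fintype m] [DecidableEq m]
    [Fintype n] (A : Matrix m n R) (B : Matrix n m R) :
    (A * B).det = ∑ f : m → n, (∏ i, A i (f i)) * (B.submatrix f id).det := by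
  have hrows : A * B = fun i => ∑ k, A i k • B k := by
    ext i j; simp [Matrix.mul_apply, Finset.sum_apply]
  rw [hrows]
  change Matrix.detRowAlternating.toMultilinearMap _ = _
  rw [MultilinearMap.map_sum]
  refine Finset.sum_congr rfl fun f _ => ?_
  rw [MultilinearMap.map_smul_univ, smul_eq_mul]
  rfl

open Classical in
theorem Fin.sum_injective_eq_sum_strictMono_sum_perm {ι M : Type*} [Fintype ι] [LinearOrder ι]
    [AddCommMonoid M] {r : ℕ} (F : (Fin r → ι) → M) :
    ∑ f : Fin r → ι with f.Injective, F f =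
      ∑ g : Fin r → ι with StrictMono g, ∑ σ : Equiv.Perm (Fin r), F (g ∘ σ) := by
  rw [← sum_product' (f := fun g (σ : Equiv.Perm (Fin r)) => F (g ∘ σ))]
  -- every injective `f` is `g ∘ σ` for a unique strictly monotone `g`, namely `f ∘ sort f`
  symm
  refine sum_nbij' (fun gσ => gσ.1 ∘ gσ.2)
    (fun f : Fin r → ι => (f ∘ Tuple.sort f, (Tuple.sort f)⁻¹)) ?_ ?_ ?_ ?_ fun _ _ => rfl
  · simp only [mem_product, mem_filter, mem_univ, true_and, and_true]
    rintro ⟨g, σ⟩ hg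
    exact hg.injective.comp σ.injective
  · simp only [mem_product, mem_filter, mem_univ, true_and, and_true]
    intro f hf
    exact (Tuple.monotone_sort f).strictMono_of_injective (hf.comp (Equiv.injective _))
  · simp only [mem_product, mem_filter, mem_univ, true_and, and_true]
    rintro ⟨g, σ⟩ hg
    have : Tuple.sort (g ∘ σ) = σ⁻¹ := (Tuple.eq_sort_iff.2
      ⟨by simpa [Function.comp_assoc] using hg.monotone,
        fun i j hij h => absurd (hg.injective (by simpa using h)) hij.ne⟩).symm
    simp [this, Function.comp_assoc]
  · intro f _
    simp [Function.comp_assoc]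

open Classical in
theorem Matrix.det_mul_eq_sum_strictMono {ι : Type*} [Fintype ι] [LinearOrder ι] {r : ℕ}
    (A : Matrix (Fin r) ι R) (B : Matrix ι (Fin r) R) :
    (A * B).det = ∑ g : Fin r → ι with StrictMono g,
      (A.submatrix id g).det * (B.submatrix g id).det := by
  set F : (Fin r → ι) → R := fun f => (∏ i, A i (f i)) * (B.submatrix f id).det
  have hF : ∀ (g : Fin r → ι) (σ : Equiv.Perm (Fin r)),
      F (g ∘ σ) = Equiv.Perm.sign σ • (∏ i, A i (g (σ i))) * (B.submatrix g id).det := by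
    intro g σ
    have : B.submatrix (g ∘ σ) id = (B.submatrix g id).submatrix σ id := rfl
    simp only [F, this, Matrix.det_permute, Function.comp_apply, Units.smul_def]
    ring
  calc (A * B).det = ∑ f, F f := Matrix.det_mul_eq_sum_prod_mul_det_submatrix A B
    _ = ∑ f with f.Injective, F f := by
      refine (sum_subset (filter_subset _ _) fun f _ hf => ?_).symm
      obtain ⟨i, j, hfij, hij⟩ := Function.not_injective_iff.1 (by simpa using hf)
      change _ * _ = _
      rw [Matrix.det_zero_of_row_eq hij (funext fun k => by simp [hfij]), mul_zero]
    _ = ∑ g : Fin r → ι with StrictMono g, ∑ σ : Equiv.Perm (Fin r), F (g ∘ σ) :=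
      Fin.sum_injective_eq_sum_strictMono_sum_perm F
    _ = _ := by
      refine sum_congr rfl fun g _ => ?_
      simp only [hF, ← sum_mul, ← Matrix.det_transpose (A.submatrix id g), Matrix.det_apply]
      rfl

end CauchyBinet

theorem TNN.mul {N : ℕ} {A B : Matrix (Fin N) (Fin N) ℝ} (hA : TNN A) (hB : TNN B) :
    TNN (A * B) := by
  intro r ρ γ hρ hγ
  rw [Matrix.submatrix_mul A B ρ id γ Function.bijective_id, Matrix.det_mul_eq_sum_strictMono]
  exact sum_nonneg fun g hg =>
    mul_nonneg (hA r ρ g hρ (mem_filter.1 hg).2) (hB r g γ (mem_filter.1 hg).2 hγ)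

theorem Equiv.Perm.eq_one_of_forall_mem_Icc {r : ℕ} {f g : Fin r → ℕ} (hf : StrictMono f)
    (hg : StrictMono g) {σ : Equiv.Perm (Fin r)} (h : ∀ i, f (σ i) ∈ Set.Icc (g i) (g i + 1)) :
    σ = 1 := by
  have hmono : Monotone (f ∘ σ) := by
    intro i j hij
    rcases hij.eq_or_lt with rfl | hij
    · rfl
    · calc f (σ i) ≤ g i + 1 := (h i).2
        _ ≤ g j := hg hij
        _ ≤ f (σ j) := (h j).1
  exact (Equiv.Perm.monotone_iff σ).1 fun i j hij => hf.le_iff_le.1 (hmono hij)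

theorem TNN.of_lowerBidiagonal {N : ℕ} {L : Matrix (Fin N) (Fin N) ℝ} (h0 : ∀ i j, 0 ≤ L i j)
    (hL : ∀ i j, L i j ≠ 0 → (i : ℕ) ∈ Set.Icc (j : ℕ) (j + 1)) : TNN L := by
  intro r ρ γ hρ hγ
  rw [Matrix.det_apply, sum_eq_single 1 _ (by simp)]
  · simpa using prod_nonneg fun i _ => h0 (ρ i) (γ i)
  · intro σ _ hσ
    suffices ∏ i, L (ρ (σ i)) (γ i) = 0 by simp [this]
    by_contra hne
    exact hσ <| Equiv.Perm.eq_one_of_forall_mem_Icc (Fin.val_strictMono.comp hρ)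
      (Fin.val_strictMono.comp hγ) fun i => hL _ _ (prod_ne_zero_iff.1 hne i (mem_univ i))

def unitLowerBidiagonal {R : Type*} [Zero R] [One R] (N : ℕ) (c : ℕ → R) :
    Matrix (Fin N) (Fin N) R :=
  Matrix.of fun i j => if (i : ℕ) = j then 1 else if (i : ℕ) = j + 1 then c j else 0

theorem tnn_unitLowerBidiagonal {N : ℕ} {c : ℕ → ℝ} (hc : ∀ j, 0 ≤ c j) :
    TNN (unitLowerBidiagonal N c) := by
  refine TNN.of_lowerBidiagonal (fun i j => ?_) fun i j hij => ?_
  · simp only [unitLowerBidiagonal, Matrix.of_apply]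
    split_ifs <;> simp [hc]
  · simp only [unitLowerBidiagonal, Matrix.of_apply] at hij
    split_ifs at hij <;> simp_all

theorem Matrix.of_mul_unitLowerBidiagonal {R : Type*} [Semiring R] {N : ℕ} (L : ℕ → ℕ → R)
    (hL : ∀ i j, i < j → L i j = 0) (c : ℕ → R) :
    (Matrix.of fun i j : Fin N => L i j) * unitLowerBidiagonal N c
      = Matrix.of fun i j : Fin N => L i j + L i (j + 1) * c j := by
  ext i j
  simp only [Matrix.mul_apply, Matrix.of_apply, unitLowerBidiagonal]
  rw [Fin.sum_univ_eq_sum_range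
      (fun k => L i k * if k = j then 1 else if k = j + 1 then c j else 0),
    sum_eq_add (j : ℕ) ((j : ℕ) + 1) (by omega)]
  · simp
  · intro k _ hk
    simp [hk.1, hk.2]
  · simp
  · intro hj
    simp [hL i (j + 1) (by simp at hj; omega)]

/-- The infinite matrix `1ₜ ⊕ (S(i, j))ᵢⱼ`: the Stirling matrix bordered by an identity block of
size `t`. -/
def paddedStirling (t i j : ℕ) : ℕ :=
  if i < t ∨ j < t then if i = j then 1 else 0 else Nat.stirlingSecond (i - t) (j - t)

theorem paddedStirling_eq_zero_of_lt {t i j : ℕ} (h : i < j) : paddedStirling t i j = 0 := by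
  unfold paddedStirling
  split_ifs
  · omega
  · rfl
  · exact Nat.stirlingSecond_eq_zero_of_lt (by omega)

theorem paddedStirling_eq_add_mul (t i j : ℕ) :
    paddedStirling t i j =
      paddedStirling (t + 1) i j + paddedStirling (t + 1) i (j + 1) * (j - t) := by
  by_cases h : i < t ∨ j < t
  · simp only [paddedStirling, h, if_true, show i < t + 1 ∨ j < t + 1 by omega]
    split_ifs <;> omega
  obtain ⟨m, rfl⟩ : ∃ m, i = t + m := ⟨i - t, by omega⟩
  obtain ⟨k, rfl⟩ : ∃ k, j = t + k := ⟨j - t, by omega⟩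
  rcases m with _ | m <;> rcases k with _ | k
  · simp [paddedStirling]
  · simp [paddedStirling]; omega
  · simp [paddedStirling]
  · simp [paddedStirling, Nat.stirlingSecond_succ_succ, Nat.add_sub_add_left]
    ring

theorem paddedStirling_matrix_eq_mul (N t : ℕ) :
    (Matrix.of fun i j : Fin N => (paddedStirling t i j : ℝ)) =
      (Matrix.of fun i j : Fin N => (paddedStirling (t + 1) i j : ℝ)) *
        unitLowerBidiagonal N fun j => ((j - t : ℕ) : ℝ) := by
  rw [Matrix.of_mul_unitLowerBidiagonal (fun i j => (paddedStirling (t + 1) i j : ℝ))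
    (fun i j h => by simp [paddedStirling_eq_zero_of_lt h])]
  ext i j
  simp [paddedStirling_eq_add_mul t i j]

theorem tnn_paddedStirling (N t : ℕ) :
    TNN (Matrix.of fun i j : Fin N => (paddedStirling t i j : ℝ)) := by
  obtain ⟨d, hd⟩ : ∃ d, N ≤ t + d := ⟨N, by omega⟩
  induction d generalizing t with
  | zero =>
    -- for `N ≤ t` the matrix is the identity
    refine TNN.of_lowerBidiagonal (fun _ _ => Nat.cast_nonneg _) fun i j hij => ?_
    have : (i : ℕ) = j := by
      by_contra hne
      simp [paddedStirling, hne, show (i : ℕ) < t by omega] at hij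
    simp [this]
  | succ d ih =>
    rw [paddedStirling_matrix_eq_mul]
    exact (ih (t + 1) (by omega)).mul (tnn_unitLowerBidiagonal fun _ => Nat.cast_nonneg _)

namespace Finpartition

variable {α : Type*} [DecidableEq α] {s p : Finset α} {a : α}

theorem sup_erase_parts (Q : Finpartition s) (hp : p ∈ Q.parts) :
    (Q.parts.erase p).sup id = s \ p := by
  ext x
  simp only [mem_sup, mem_erase, id_eq, mem_sdiff]
  constructor
  · rintro ⟨q, ⟨hqp, hq⟩, hxq⟩
    exact ⟨Q.subset hq hxq, fun hxp => hqp (Q.eq_of_mem_parts hq hp hxq hxp)⟩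
  · rintro ⟨hxs, hxp⟩
    obtain ⟨q, hq, hxq⟩ := Q.exists_mem hxs
    exact ⟨q, ⟨fun h => hxp (h ▸ hxq), hq⟩, hxq⟩

def erase (ha : a ∉ s) (P : Finpartition (insert a s)) : Finpartition s :=
  (P.avoid {a}).copy (by rw [sdiff_singleton_eq_erase, erase_insert ha])

def addSingleton (ha : a ∉ s) (Q : Finpartition s) : Finpartition (insert a s) :=
  Q.extend (b := {a}) (singleton_ne_empty a) (disjoint_singleton_right.2 ha)
    (by rw [sup_eq_union, union_comm, ← insert_eq])

def insertIntoPart (ha : a ∉ s) (Q : Finpartition s) (hp : p ∈ Q.parts) :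
    Finpartition (insert a s) :=
  (Q.ofSubset (erase_subset p Q.parts) (Q.sup_erase_parts hp)).extend (b := insert a p)
    (insert_ne_empty a p)
    (disjoint_insert_right.2 ⟨fun h => ha (mem_sdiff.1 h).1, sdiff_disjoint⟩)
    (by rw [sup_eq_union, union_insert, sdiff_union_of_subset (Q.subset hp)])

@[simp] theorem parts_addSingleton (ha : a ∉ s) (Q : Finpartition s) :
    (Q.addSingleton ha).parts = insert {a} Q.parts := rfl

@[simp] theorem parts_insertIntoPart (ha : a ∉ s) (Q : Finpartition s) (hp : p ∈ Q.parts) :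
    (Q.insertIntoPart ha hp).parts = insert (insert a p) (Q.parts.erase p) := rfl

theorem notMem_parts_of_mem (ha : a ∉ s) (Q : Finpartition s) {t : Finset α} (hat : a ∈ t) :
    t ∉ Q.parts :=
  fun h => ha (Q.subset h hat)

theorem notMem_of_mem_parts_of_ne_part {P : Finpartition s} {t : Finset α} (ht : t ∈ P.parts)
    (hne : t ≠ P.part a) : a ∉ t :=
  fun hat => hne (P.part_eq_of_mem ht hat).symm

theorem not_subset_singleton_of_mem_parts {P : Finpartition s} {t : Finset α}
    (ht : t ∈ P.parts) (hat : a ∉ t) : ¬t ⊆ {a} := fun hsub => by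
  obtain ⟨x, hx⟩ := P.nonempty_of_mem_parts ht
  exact hat (mem_singleton.1 (hsub hx) ▸ hx)

theorem erase_part_notMem_erase_parts {P : Finpartition s} (ha : a ∈ s) :
    (P.part a).erase a ∉ P.parts.erase (P.part a) := by
  intro h
  obtain ⟨hne, ht⟩ := mem_erase.1 h
  obtain ⟨x, hx⟩ := P.nonempty_of_mem_parts ht
  exact hne (P.eq_of_mem_parts ht (P.part_mem.2 ha) hx (mem_of_mem_erase hx))

theorem parts_erase_of_singleton_mem (ha : a ∉ s) {P : Finpartition (insert a s)}
    (h : {a} ∈ P.parts) : (P.erase ha).parts = P.parts.erase {a} := by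
  have hpart : P.part a = {a} := P.part_eq_of_mem h (mem_singleton_self a)
  ext t
  simp only [erase, copy_parts, mem_avoid, mem_erase]
  constructor
  · rintro ⟨d, hd, hda, rfl⟩
    have had : a ∉ d := notMem_of_mem_parts_of_ne_part hd (hpart ▸ fun h => hda h.le)
    rw [sdiff_singleton_eq_erase, erase_eq_of_notMem had]
    exact ⟨fun h => hda h.le, hd⟩
  · rintro ⟨hta, ht⟩
    have hat : a ∉ t := notMem_of_mem_parts_of_ne_part ht (hpart ▸ hta)
    exact ⟨t, ht, not_subset_singleton_of_mem_parts ht hat,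
      by rw [sdiff_singleton_eq_erase, erase_eq_of_notMem hat]⟩

theorem parts_erase_of_singleton_notMem (ha : a ∉ s) {P : Finpartition (insert a s)}
    (h : {a} ∉ P.parts) :
    (P.erase ha).parts = insert ((P.part a).erase a) (P.parts.erase (P.part a)) := by
  have hmem : a ∈ P.part a := P.mem_part_self.2 (mem_insert_self a s)
  have hpart : P.part a ∈ P.parts := P.part_mem.2 (mem_insert_self a s)
  ext t
  simp only [erase, copy_parts, mem_avoid, mem_erase, mem_insert]
  constructor
  · rintro ⟨d, hd, hda, rfl⟩
    by_cases hdp : d = P.part a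
    · exact Or.inl (by rw [hdp, sdiff_singleton_eq_erase])
    · rw [sdiff_singleton_eq_erase, erase_eq_of_notMem (notMem_of_mem_parts_of_ne_part hd hdp)]
      exact Or.inr ⟨hdp, hd⟩
  · rintro (rfl | ⟨htp, ht⟩)
    · refine ⟨P.part a, hpart, fun hsub => h ?_, sdiff_singleton_eq_erase a _⟩
      exact (Nonempty.subset_singleton_iff ⟨a, hmem⟩).1 hsub ▸ hpart
    · have hat := notMem_of_mem_parts_of_ne_part ht htp
      exact ⟨t, ht, not_subset_singleton_of_mem_parts ht hat,
        by rw [sdiff_singleton_eq_erase, erase_eq_of_notMem hat]⟩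

theorem card_parts_erase_of_singleton_notMem (ha : a ∉ s) {P : Finpartition (insert a s)}
    (h : {a} ∉ P.parts) : #(P.erase ha).parts = #P.parts := by
  have has : a ∈ insert a s := mem_insert_self a s
  rw [parts_erase_of_singleton_notMem ha h, card_insert_of_notMem
    (erase_part_notMem_erase_parts has), card_erase_add_one (P.part_mem.2 has)]

theorem insertIntoPart_erase (ha : a ∉ s) {P : Finpartition (insert a s)} (h : {a} ∉ P.parts)
    (hp : (P.part a).erase a ∈ (P.erase ha).parts) : (P.erase ha).insertIntoPart ha hp = P := by
  have has : a ∈ insert a s := mem_insert_self a s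
  ext1
  rw [parts_insertIntoPart, parts_erase_of_singleton_notMem ha h, insert_erase
    (P.mem_part_self.2 has), erase_insert (erase_part_notMem_erase_parts has),
    insert_erase (P.part_mem.2 has)]

theorem insert_notMem_erase_parts (ha : a ∉ s) (Q : Finpartition s) :
    insert a p ∉ Q.parts.erase p :=
  fun h => Q.notMem_parts_of_mem ha (mem_insert_self a p) (mem_of_mem_erase h)

theorem card_parts_insertIntoPart (ha : a ∉ s) {Q : Finpartition s} (hp : p ∈ Q.parts) :
    #(Q.insertIntoPart ha hp).parts = #Q.parts := by
  rw [parts_insertIntoPart, card_insert_of_notMem (insert_notMem_erase_parts ha Q),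
    card_erase_add_one hp]

theorem singleton_notMem_parts_insertIntoPart (ha : a ∉ s) {Q : Finpartition s}
    (hp : p ∈ Q.parts) : {a} ∉ (Q.insertIntoPart ha hp).parts := by
  have hap : a ∉ p := fun h => Q.notMem_parts_of_mem ha h hp
  have hne : ({a} : Finset α) ≠ insert a p :=
    fun h => not_subset_singleton_of_mem_parts hp hap (h ▸ subset_insert a p)
  simp [hne, Q.notMem_parts_of_mem ha (mem_singleton_self a)]

theorem part_insertIntoPart (ha : a ∉ s) {Q : Finpartition s} (hp : p ∈ Q.parts) :
    (Q.insertIntoPart ha hp).part a = insert a p :=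
  part_eq_of_mem _ (by simp) (mem_insert_self a p)

theorem erase_insertIntoPart (ha : a ∉ s) {Q : Finpartition s} (hp : p ∈ Q.parts) :
    (Q.insertIntoPart ha hp).erase ha = Q := by
  have hap : a ∉ p := fun h => Q.notMem_parts_of_mem ha h hp
  ext1
  rw [parts_erase_of_singleton_notMem ha (singleton_notMem_parts_insertIntoPart ha hp),
    part_insertIntoPart ha hp, erase_insert hap, parts_insertIntoPart,
    erase_insert (insert_notMem_erase_parts ha Q), insert_erase hp]

theorem card_filter_singleton_mem (ha : a ∉ s) (k : ℕ) :
    #{P : Finpartition (insert a s) | #P.parts = k + 1 ∧ {a} ∈ P.parts} =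
      #{Q : Finpartition s | #Q.parts = k} := by
  refine card_bij' (fun P _ => P.erase ha) (fun Q _ => Q.addSingleton ha) ?_ ?_ ?_ ?_ <;>
    simp only [mem_filter, mem_univ, true_and]
  · rintro P ⟨hcard, hP⟩
    rw [parts_erase_of_singleton_mem ha hP, card_erase_of_mem hP, hcard, Nat.add_sub_cancel]
  · rintro Q rfl
    simp [card_insert_of_notMem (Q.notMem_parts_of_mem ha (mem_singleton_self a))]
  · rintro P ⟨-, hP⟩
    ext1
    rw [parts_addSingleton, parts_erase_of_singleton_mem ha hP, insert_erase hP]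
  · intro Q _
    ext1
    rw [parts_erase_of_singleton_mem ha (by simp), parts_addSingleton,
      erase_insert (Q.notMem_parts_of_mem ha (mem_singleton_self a))]

theorem card_filter_singleton_notMem (ha : a ∉ s) (k : ℕ) :
    #{P : Finpartition (insert a s) | #P.parts = k + 1 ∧ {a} ∉ P.parts} =
      (k + 1) * #{Q : Finpartition s | #Q.parts = k + 1} := by
  have hsigma : (k + 1) * #{Q : Finpartition s | #Q.parts = k + 1} =
      #(({Q : Finpartition s | #Q.parts = k + 1} : Finset _).sigma fun Q => Q.parts) := by
    rw [card_sigma, sum_const_nat fun Q hQ => (mem_filter.1 hQ).2, mul_comm]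
  rw [hsigma]
  refine card_bij' (fun P _ => ⟨P.erase ha, (P.part a).erase a⟩)
    (fun Q hQ => Q.1.insertIntoPart ha (mem_sigma.1 hQ).2) ?_ ?_ ?_ ?_ <;>
    simp only [mem_filter, mem_univ, true_and, mem_sigma]
  · rintro P ⟨hcard, hP⟩
    refine ⟨(card_parts_erase_of_singleton_notMem ha hP).trans hcard, ?_⟩
    rw [parts_erase_of_singleton_notMem ha hP]
    exact mem_insert_self _ _
  · rintro ⟨Q, p⟩ ⟨hcard, hp⟩
    exact ⟨(card_parts_insertIntoPart ha hp).trans hcard,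
      singleton_notMem_parts_insertIntoPart ha hp⟩
  · rintro P ⟨-, hP⟩
    exact insertIntoPart_erase ha hP _
  · rintro ⟨Q, p⟩ ⟨-, hp⟩
    have hap : a ∉ p := fun h => Q.notMem_parts_of_mem ha h hp
    simp only [part_insertIntoPart ha hp, erase_insert hap, erase_insertIntoPart]

theorem card_filter_card_parts_insert (ha : a ∉ s) (k : ℕ) :
    #{P : Finpartition (insert a s) | #P.parts = k + 1} =
      #{Q : Finpartition s | #Q.parts = k} +
        (k + 1) * #{Q : Finpartition s | #Q.parts = k + 1} := by
  rw [← card_filter_singleton_mem ha, ← card_filter_singleton_notMem ha, ← filter_filter,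
    ← filter_filter, card_filter_add_card_filter_not]

theorem card_filter_card_parts_eq_stirlingSecond (s : Finset α) (k : ℕ) :
    #{P : Finpartition s | #P.parts = k} = Nat.stirlingSecond #s k := by
  induction s using Finset.induction_on generalizing k with
  | empty =>
    have hparts (P : Finpartition (∅ : Finset α)) : P.parts = ∅ := parts_eq_empty_iff.2 rfl
    rcases k with _ | k
    · rw [card_empty, Nat.stirlingSecond_zero, card_eq_one]
      exact ⟨Finpartition.empty _, by ext P; simp [hparts, Finpartition.ext_iff]⟩
    · simp [hparts]
  | insert a s ha ih =>
    rw [card_insert_of_notMem ha]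
    rcases k with _ | k
    · simp [parts_eq_empty_iff]
    · rw [card_filter_card_parts_insert ha, ih, ih, Nat.stirlingSecond_succ_succ, add_comm]

end Finpartition

theorem stirling2_eq_stirlingSecond (m k : ℕ) : stirling2 m k = Nat.stirlingSecond m k := by
  rw [stirling2, Nat.card_eq_fintype_card, Fintype.card_subtype,
    Finpartition.card_filter_card_parts_eq_stirlingSecond, card_univ, Fintype.card_fin]

theorem statement17 (n : ℕ) :
    TNN (Matrix.of fun m k : Fin (n+1) => (stirling2 (m : ℕ) (k : ℕ) : ℝ)) := by
  simpa [paddedStirling, stirling2_eq_stirlingSecond] using tnn_paddedStirling (n + 1) 0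
end
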